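/- Let G be a totally disconnected locally compact group, α a continuous endomorphism of G, and U a compact open subgroup of G. The following are equivalent: (i) U · (U ∩ α⁻¹(U)) = U₊ · (U ∩ α⁻¹(U)) as subsets of G; (ii) for every u ∈ U there exists u₊ ∈ U₊ such that u₊⁻¹u ∈ U₋; (iii) U is tidy above for α, i.e., U = U₊U₋. -/

import Mathlib

open Pointwise Subgroup Filter

variable {G : Type*}

/-- The `n`-fold iterate of an endomorphism `α : G →* G`, as a monoid homomorphism. -/
def iterHom [Group G] (α : G →* G) : ℕ → G →* G
  | 0 => MonoidHom.id G
  | n + 1 => α.comp (iterHom α n)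

/-- The descending sequence `U_0 = U`, `U_{n+1} = U ⊓ α(U_n)`. -/
def seqU [Group G] (α : G →* G) (U : Subgroup G) : ℕ → Subgroup G
  | 0 => U
  | n + 1 => U ⊓ Subgroup.map α (seqU α U n)

/-- `U₊ = ⋂ₙ Uₙ`. -/
def Uplus [Group G] (α : G →* G) (U : Subgroup G) : Subgroup G := ⨅ n, seqU α U n

/-- `U₋ = ⋂ₙ α^{-n}(U)`. -/
def Uminus [Group G] (α : G →* G) (U : Subgroup G) : Subgroup G :=
  ⨅ n, Subgroup.comap (iterHom α n) U

/-- `U₊₊ = ⋃ₙ αⁿ(U₊)` as a subset of `G`. -/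
def Upp [Group G] (α : G →* G) (U : Subgroup G) : Set G :=
  ⋃ n, iterHom α n '' (Uplus α U : Set G)

/-- `U₋₋ = ⋃ₙ α^{-n}(U₋)` as a subset of `G`. -/
def Umm [Group G] (α : G →* G) (U : Subgroup G) : Set G :=
  ⋃ n, iterHom α n ⁻¹' (Uminus α U : Set G)

/-- `U₋ₙ = ⋂_{k=0}^{n} α^{-k}(U)`. -/
def Uneg [Group G] (α : G →* G) (U : Subgroup G) (n : ℕ) : Subgroup G :=
  ⨅ k ∈ Finset.range (n + 1), Subgroup.comap (iterHom α k) U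

/-- `U` is tidy above for `α` if `U = U₊U₋`. -/
def TidyAbove [Group G] (α : G →* G) (U : Subgroup G) : Prop :=
  (U : Set G) = (Uplus α U : Set G) * (Uminus α U : Set G)

/-- `U` is tidy below for `α` if `U₋₋` is closed. -/
def TidyBelow [Group G] [TopologicalSpace G] (α : G →* G) (U : Subgroup G) : Prop :=
  IsClosed (Umm α U)

/-- `U` is tidy for `α` if it is tidy above and tidy below for `α`. -/
def Tidy [Group G] [TopologicalSpace G] (α : G →* G) (U : Subgroup G) : Prop :=
  TidyAbove α U ∧ TidyBelow α U

/-- The scale of `α`: the minimum of `[α(V) : α(V) ∩ V]` over compact open subgroups `V`. -/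
noncomputable def scale [Group G] [TopologicalSpace G] (α : G →* G) : ℕ :=
  sInf {n : ℕ | ∃ V : Subgroup G, IsCompact (V : Set G) ∧ IsOpen (V : Set G) ∧
    n = Subgroup.relIndex V (Subgroup.map α V)}


section Aux

variable [Group G] (α : G →* G) (U : Subgroup G)

lemma iterHom_succ_apply' (n : ℕ) (x : G) :
    iterHom α (n + 1) x = iterHom α n (α x) := by
  induction n generalizing x with
  | zero => rfl
  | succ n ih =>
    show α (iterHom α (n + 1) x) = α (iterHom α n (α x))
    rw [ih x]

lemma mem_Uplus {x : G} : x ∈ Uplus α U ↔ ∀ n, x ∈ seqU α U n := by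
  simp [Uplus, Subgroup.mem_iInf]

lemma mem_Uminus {x : G} : x ∈ Uminus α U ↔ ∀ n, iterHom α n x ∈ U := by
  simp [Uminus, Subgroup.mem_iInf, Subgroup.mem_comap]

lemma mem_Uneg {x : G} {n : ℕ} : x ∈ Uneg α U n ↔ ∀ k ≤ n, iterHom α k x ∈ U := by
  simp [Uneg, Subgroup.mem_iInf, Subgroup.mem_comap, Nat.lt_succ_iff]

lemma seqU_antitone (n : ℕ) : seqU α U (n + 1) ≤ seqU α U n := by
  induction n with
  | zero => exact inf_le_left
  | succ n ih => exact inf_le_inf le_rfl (Subgroup.map_mono ih)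

lemma seqU_le (n : ℕ) : seqU α U n ≤ U := by
  cases n with
  | zero => exact le_rfl
  | succ n => exact inf_le_left

lemma Uplus_le : Uplus α U ≤ U := iInf_le _ 0

lemma Uminus_le : Uminus α U ≤ U := by
  intro x hx
  exact (mem_Uminus α U).1 hx 0

lemma Uminus_le_comap : Uminus α U ≤ U ⊓ Subgroup.comap α U := by
  intro x hx
  rw [mem_Uminus] at hx
  refine ⟨hx 0, ?_⟩
  have := hx 1
  rwa [iterHom_succ_apply'] at this

lemma mem_Uminus_iff_Uneg {x : G} : x ∈ Uminus α U ↔ ∀ n, x ∈ Uneg α U n := by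
  rw [mem_Uminus]
  constructor
  · intro h n
    rw [mem_Uneg]
    exact fun k _ => h k
  · intro h n
    exact (mem_Uneg α U).1 (h n) n le_rfl

lemma Uneg_antitone (n : ℕ) : Uneg α U (n + 1) ≤ Uneg α U n := by
  intro x hx
  rw [mem_Uneg] at hx ⊢
  exact fun k hk => hx k (hk.trans (Nat.le_succ n))

end Aux

section Top

variable [Group G] [TopologicalSpace G] [IsTopologicalGroup G] [TotallyDisconnectedSpace G]
  (α : G →* G) (hα : Continuous α) (U : Subgroup G) (hUc : IsCompact (U : Set G))

include hα

lemma continuous_iterHom (n : ℕ) : Continuous (iterHom α n) := by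
  induction n with
  | zero => exact continuous_id
  | succ n ih => exact hα.comp ih

include hUc

lemma isCompact_seqU (n : ℕ) : IsCompact ((seqU α U n : Subgroup G) : Set G) := by
  induction n with
  | zero => exact hUc
  | succ n ih =>
    have : ((seqU α U (n + 1) : Subgroup G) : Set G)
        = (U : Set G) ∩ (α '' (seqU α U n : Set G)) := by
      show ((U ⊓ Subgroup.map α (seqU α U n) : Subgroup G) : Set G) = _
      rw [Subgroup.coe_inf, Subgroup.coe_map]
    rw [this]
    exact hUc.inter_right (ih.image hα).isClosed

lemma isClosed_Uplus : IsClosed ((Uplus α U : Subgroup G) : Set G) := by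
  have : ((Uplus α U : Subgroup G) : Set G) = ⋂ n, ((seqU α U n : Subgroup G) : Set G) := by
    ext x
    simp only [SetLike.mem_coe, Set.mem_iInter, mem_Uplus]
  rw [this]
  exact isClosed_iInter fun n => (isCompact_seqU α hα U hUc n).isClosed

lemma isCompact_Uplus : IsCompact ((Uplus α U : Subgroup G) : Set G) :=
  hUc.of_isClosed_subset (isClosed_Uplus α hα U hUc) (Uplus_le α U)

lemma isClosed_Uneg (n : ℕ) : IsClosed ((Uneg α U n : Subgroup G) : Set G) := by
  have : ((Uneg α U n : Subgroup G) : Set G)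
      = ⋂ k ∈ Finset.range (n + 1), (iterHom α k) ⁻¹' (U : Set G) := by
    ext x
    simp only [SetLike.mem_coe, mem_Uneg, Set.mem_iInter, Set.mem_preimage,
      Finset.mem_range, Nat.lt_succ_iff]
  rw [this]
  exact isClosed_biInter fun k _ => (hUc.isClosed).preimage (continuous_iterHom α hα k)

/-- Every element of `U₊` has a preimage under `α` lying in `U₊`. -/
lemma Uplus_sub_image (p : G) (hp : p ∈ Uplus α U) : ∃ q ∈ Uplus α U, α q = p := by
  set S : ℕ → Set G := fun n => ((seqU α U n : Subgroup G) : Set G) ∩ α ⁻¹' {p} with hS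
  have hne : ∀ n, (S n).Nonempty := by
    intro n
    have hp1 : p ∈ seqU α U (n + 1) := (mem_Uplus α U).1 hp (n + 1)
    obtain ⟨-, q, hq, hq2⟩ := hp1
    exact ⟨q, hq, by simpa using hq2⟩
  have hsub : ∀ n, S (n + 1) ⊆ S n := fun n =>
    Set.inter_subset_inter_left _ (seqU_antitone α U n)
  have hclosed : ∀ n, IsClosed (S n) :=
    fun n => ((isCompact_seqU α hα U hUc n).isClosed).inter
      (isClosed_singleton.preimage hα)
  have hcpt : IsCompact (S 0) :=
    (isCompact_seqU α hα U hUc 0).inter_right (isClosed_singleton.preimage hα)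
  obtain ⟨q, hq⟩ := IsCompact.nonempty_iInter_of_sequence_nonempty_isCompact_isClosed
    S hsub hne hcpt hclosed
  simp only [Set.mem_iInter, hS, Set.mem_inter_iff, Set.mem_preimage,
    Set.mem_singleton_iff, SetLike.mem_coe] at hq
  exact ⟨q, (mem_Uplus α U).2 fun n => (hq n).1, (hq 0).2⟩

/-- Induction step: `U ⊆ U₊ · U₋ₙ` for every `n`. -/
lemma subset_Uplus_mul_Uneg
    (h : (U : Set G) ⊆ (Uplus α U : Set G) * ((U ⊓ Subgroup.comap α U : Subgroup G) : Set G))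
    (n : ℕ) : (U : Set G) ⊆ (Uplus α U : Set G) * ((Uneg α U n : Subgroup G) : Set G) := by
  induction n with
  | zero =>
    intro u hu
    refine ⟨1, (Uplus α U).one_mem, u, ?_, one_mul u⟩
    rw [SetLike.mem_coe, mem_Uneg]
    intro k hk
    interval_cases k
    exact hu
  | succ n ih =>
    intro u hu
    obtain ⟨v, hv, w, hw, rfl⟩ := h hu
    rw [SetLike.mem_coe, Subgroup.mem_inf, Subgroup.mem_comap] at hw
    obtain ⟨p, hp, q, hq, hpq⟩ := ih hw.2
    obtain ⟨p', hp', hp'α⟩ := Uplus_sub_image α hα U hUc p hp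
    refine ⟨v * p', (Uplus α U).mul_mem hv hp', p'⁻¹ * w, ?_, by group⟩
    rw [SetLike.mem_coe, mem_Uneg]
    intro k hk
    match k with
    | 0 =>
      show p'⁻¹ * w ∈ U
      exact U.mul_mem (U.inv_mem (Uplus_le α U hp')) hw.1
    | (k + 1) =>
      rw [iterHom_succ_apply', map_mul, map_inv, hp'α]
      have : p⁻¹ * α w = q := by rw [← hpq]; group
      rw [this]
      exact (mem_Uneg α U).1 hq k (Nat.succ_le_succ_iff.1 hk)

lemma subset_Uplus_mul_Uminus
    (h : (U : Set G) ⊆ (Uplus α U : Set G) * ((U ⊓ Subgroup.comap α U : Subgroup G) : Set G)) :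
    (U : Set G) ⊆ (Uplus α U : Set G) * (Uminus α U : Set G) := by
  intro u hu
  set S : ℕ → Set G :=
    fun n => ((Uplus α U : Subgroup G) : Set G) ∩ {v | v⁻¹ * u ∈ Uneg α U n} with hS
  have hne : ∀ n, (S n).Nonempty := by
    intro n
    obtain ⟨p, hp, q, hq, hpq⟩ := subset_Uplus_mul_Uneg α hα U hUc h n hu
    refine ⟨p, hp, ?_⟩
    show p⁻¹ * u ∈ Uneg α U n
    have : p⁻¹ * u = q := by rw [← hpq]; group
    rw [this]; exact hq
  have hsub : ∀ n, S (n + 1) ⊆ S n := fun n =>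
    Set.inter_subset_inter_right _ (fun v hv => Uneg_antitone α U n hv)
  have hclosed : ∀ n, IsClosed (S n) := by
    intro n
    refine (isClosed_Uplus α hα U hUc).inter ?_
    have : {v : G | v⁻¹ * u ∈ Uneg α U n}
        = (fun v : G => v⁻¹ * u) ⁻¹' ((Uneg α U n : Subgroup G) : Set G) := rfl
    rw [this]
    exact (isClosed_Uneg α hα U hUc n).preimage (by continuity)
  have hcpt : IsCompact (S 0) :=
    (isCompact_Uplus α hα U hUc).inter_right (by
      have : {v : G | v⁻¹ * u ∈ Uneg α U 0}
          = (fun v : G => v⁻¹ * u) ⁻¹' ((Uneg α U 0 : Subgroup G) : Set G) := rfl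
      rw [this]
      exact (isClosed_Uneg α hα U hUc 0).preimage (by continuity))
  obtain ⟨v, hv⟩ := IsCompact.nonempty_iInter_of_sequence_nonempty_isCompact_isClosed
    S hsub hne hcpt hclosed
  simp only [Set.mem_iInter, hS, Set.mem_inter_iff, Set.mem_setOf_eq,
    SetLike.mem_coe] at hv
  refine ⟨v, (hv 0).1, v⁻¹ * u, ?_, by group⟩
  rw [SetLike.mem_coe, mem_Uminus_iff_Uneg]
  exact fun n => (hv n).2

end Top

/-- Characterizations of tidiness above: (i) `U·(U ∩ α⁻¹(U)) = U₊·(U ∩ α⁻¹(U))`;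
(ii) every `u ∈ U` agrees with some `uplus ∈ U₊` modulo `U₋`; (iii) `U = U₊U₋`. -/
theorem tidyAbove_characterizations [Group G] [TopologicalSpace G] [IsTopologicalGroup G]
    [TotallyDisconnectedSpace G] [LocallyCompactSpace G]
    (α : G →* G) (hα : Continuous α)
    (U : Subgroup G) (hUc : IsCompact (U : Set G)) (hUo : IsOpen (U : Set G)) :
    ((U : Set G) * ((U ⊓ Subgroup.comap α U : Subgroup G) : Set G)
        = (Uplus α U : Set G) * ((U ⊓ Subgroup.comap α U : Subgroup G) : Set G)
      ↔ TidyAbove α U) ∧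
    ((∀ u ∈ U, ∃ uplus ∈ Uplus α U, uplus⁻¹ * u ∈ Uminus α U) ↔ TidyAbove α U) := by
  have key : ∀ {V W : Subgroup G}, V ≤ U → W ≤ U →
      (V : Set G) * (W : Set G) ⊆ (U : Set G) := by
    intro V W hV hW x hx
    obtain ⟨v, hv, w, hw, rfl⟩ := hx
    exact U.mul_mem (hV hv) (hW hw)
  have hUW : (U : Set G) * ((U ⊓ Subgroup.comap α U : Subgroup G) : Set G) = (U : Set G) := by
    apply Set.Subset.antisymm (key le_rfl inf_le_left)
    intro u hu
    exact ⟨u, hu, 1, Subgroup.one_mem _, mul_one u⟩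
  constructor
  · constructor
    · intro h
      rw [hUW] at h
      apply Set.Subset.antisymm
      · exact subset_Uplus_mul_Uminus α hα U hUc (h.le)
      · exact key (Uplus_le α U) (Uminus_le α U)
    · intro h
      rw [hUW]
      apply Set.Subset.antisymm
      · intro u hu
        rw [TidyAbove] at h
        obtain ⟨p, hp, q, hq, rfl⟩ := h.le hu
        exact ⟨p, hp, q, Uminus_le_comap α U hq, rfl⟩
      · exact key (Uplus_le α U) inf_le_left
  · constructor
    · intro h
      apply Set.Subset.antisymm
      · intro u hu
        obtain ⟨p, hp, hpu⟩ := h u hu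
        exact ⟨p, hp, p⁻¹ * u, hpu, by group⟩
      · exact key (Uplus_le α U) (Uminus_le α U)
    · intro h u hu
      rw [TidyAbove] at h
      obtain ⟨p, hp, q, hq, rfl⟩ := h.le hu
      exact ⟨p, hp, by simpa using hq⟩
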